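/- Let s₁ be a uniformly random bitstring of length n, s₂ obtained from s₁ by independently flipping each bit with probability p_s ≤ 0.028. Let c = (3/2)p_s'. Then with probability 1 − e^{−Ω(n)}, every alignment of s₁ and s₂ that shares no edge with the diagonal alignment has cost strictly greater than the cost of the diagonal alignment. -/
import Mathlib


open Finset Real
open scoped Classical

/-- A move in the dependency graph: from `(i,j)` to `(i+1,j)` (`del`),
`(i,j+1)` (`ins`), or `(i+1,j+1)` (`diag`). -/
inductive Move : Type
  | del : Move
  | ins : Move
  | diag : Move
deriving DecidableEq

/-- The endpoint of the monotone lattice path starting at `(0,0)` described by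
a list of moves. -/
def endpos (p : List Move) : ℕ × ℕ :=
  p.foldl
    (fun q m => match m with
      | Move.del => (q.1 + 1, q.2)
      | Move.ins => (q.1, q.2 + 1)
      | Move.diag => (q.1 + 1, q.2 + 1))
    (0, 0)

/-- The weight of the path described by a list of moves, starting at vertex
`(i,j)`, in the dependency graph of `s₁, s₂`: a `diag` move from `(i−1,j−1)`
to `(i,j)` has weight `0` iff `s₁[i] = s₂[j]` (1-based), all other steps cost `1`. -/
def costFrom (s₁ s₂ : List Bool) : ℕ × ℕ → List Move → ℕ
  | _, [] => 0
  | (i, j), (Move.diag :: p) =>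
      (if s₁[i]? = s₂[j]? then 0 else 1) + costFrom s₁ s₂ (i + 1, j + 1) p
  | (i, j), (Move.del :: p) => 1 + costFrom s₁ s₂ (i + 1, j) p
  | (i, j), (Move.ins :: p) => 1 + costFrom s₁ s₂ (i, j + 1) p

/-- The weight of a path from `(0,0)` in the dependency graph of `s₁, s₂`. -/
def pathCost (s₁ s₂ : List Bool) (p : List Move) : ℕ :=
  costFrom s₁ s₂ (0, 0) p

/-- The diagonal (canonical) alignment `(0,0),(1,1),…,(n,n)`. -/
def diagPath (n : ℕ) : List Move := List.replicate n Move.diag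

/-- A path shares no edge with the diagonal alignment iff it never takes a
diagonal step from a vertex `(i,i)`. -/
def SharesNoEdgeWithDiag (p : List Move) : Prop :=
  ∀ pre : List Move, (pre ++ [Move.diag]) <+: p → (endpos pre).1 ≠ (endpos pre).2

-- auxiliary
instance : Fintype Move := ⟨⟨{Move.del, Move.ins, Move.diag}, by decide⟩, by intro x; cases x <;> decide⟩

def mstep (q : ℕ × ℕ) (m : Move) : ℕ × ℕ :=
  match m with
  | Move.del => (q.1 + 1, q.2)
  | Move.ins => (q.1, q.2 + 1)
  | Move.diag => (q.1 + 1, q.2 + 1)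

def endposFrom (z : ℕ × ℕ) (p : List Move) : ℕ × ℕ := p.foldl mstep z

lemma endpos_eq (p : List Move) : endpos p = endposFrom (0,0) p := rfl

lemma endposFrom_cons (z : ℕ × ℕ) (m : Move) (q : List Move) :
    endposFrom z (m :: q) = endposFrom (mstep z m) q := rfl

lemma endposFrom_counts (p : List Move) : ∀ z : ℕ × ℕ,
    endposFrom z p = (z.1 + (p.count Move.del + p.count Move.diag),
                      z.2 + (p.count Move.ins + p.count Move.diag)) := by
  induction p with
  | nil => intro z; simp [endposFrom]
  | cons m q ih =>
      intro z
      rw [endposFrom_cons, ih]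
      cases m <;> simp [mstep, List.count_cons] <;> omega

lemma endpos_counts (p : List Move) :
    endpos p = (p.count Move.del + p.count Move.diag,
                p.count Move.ins + p.count Move.diag) := by
  rw [endpos_eq, endposFrom_counts]; simp

lemma length_counts (p : List Move) :
    p.length = p.count Move.del + p.count Move.ins + p.count Move.diag := by
  induction p with
  | nil => simp
  | cons m q ih => cases m <;> simp [List.count_cons, ih] <;> omega

lemma costFrom_append (s₁ s₂ : List Bool) (p q : List Move) : ∀ z : ℕ × ℕ,
    costFrom s₁ s₂ z (p ++ q) = costFrom s₁ s₂ z p + costFrom s₁ s₂ (endposFrom z p) q := by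
  induction p with
  | nil => intro z; simp [costFrom, endposFrom]
  | cons m p ih =>
      intro z
      obtain ⟨a, b⟩ := z
      cases m <;> simp [costFrom, endposFrom_cons, mstep, ih] <;> omega

lemma costFrom_ext (s₁ s₂ t₁ t₂ : List Bool) (p : List Move) : ∀ z : ℕ × ℕ,
    (∀ k, k < (endposFrom z p).1 → s₁[k]? = t₁[k]?) →
    (∀ k, k < (endposFrom z p).2 → s₂[k]? = t₂[k]?) →
    costFrom s₁ s₂ z p = costFrom t₁ t₂ z p := by
  induction p with
  | nil => intro z _ _; simp [costFrom]
  | cons m p ih =>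
      intro z h1 h2
      obtain ⟨a, b⟩ := z
      have hc := endposFrom_counts p
      cases m
      · simp only [costFrom]
        rw [ih (a+1, b) (fun k hk => h1 k (by rw [endposFrom_cons] at h1 ⊢; exact hk))
            (fun k hk => h2 k (by rw [endposFrom_cons] at h2 ⊢; exact hk))]
      · simp only [costFrom]
        rw [ih (a, b+1) (fun k hk => h1 k (by rw [endposFrom_cons] at h1 ⊢; exact hk))
            (fun k hk => h2 k (by rw [endposFrom_cons] at h2 ⊢; exact hk))]
      · simp only [costFrom]
        have ha : a < (endposFrom (a,b) (Move.diag :: p)).1 := by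
          rw [endposFrom_cons, hc]; simp [mstep]; omega
        have hb : b < (endposFrom (a,b) (Move.diag :: p)).2 := by
          rw [endposFrom_cons, hc]; simp [mstep]; omega
        rw [h1 a ha, h2 b hb,
          ih (a+1, b+1) (fun k hk => h1 k (by rw [endposFrom_cons]; exact hk))
            (fun k hk => h2 k (by rw [endposFrom_cons]; exact hk))]

noncomputable def wmove : Move → ℝ
  | Move.del => 1/12
  | Move.ins => 1/12
  | Move.diag => 13/24

noncomputable def wproduct (p : List Move) : ℝ :=
  ((1:ℝ)/12) ^ (p.count Move.del + p.count Move.ins) * ((13:ℝ)/24) ^ (p.count Move.diag)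

lemma wproduct_nil : wproduct [] = 1 := by simp [wproduct]

lemma wproduct_nonneg (p : List Move) : 0 ≤ wproduct p := by
  apply mul_nonneg <;> positivity

lemma wproduct_append_single (p : List Move) (m : Move) :
    wproduct (p ++ [m]) = wproduct p * wmove m := by
  cases m <;> simp [wproduct, wmove, List.count_append, pow_succ, List.count_cons] <;> ring

lemma wproduct_cons (m : Move) (p : List Move) :
    wproduct (m :: p) = wmove m * wproduct p := by
  cases m <;> simp [wproduct, wmove, pow_succ, List.count_cons] <;> ring

lemma costFrom_single_del (s₁ s₂ : List Bool) (z : ℕ × ℕ) :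
    costFrom s₁ s₂ z [Move.del] = 1 := by obtain ⟨a,b⟩ := z; rfl

lemma costFrom_single_ins (s₁ s₂ : List Bool) (z : ℕ × ℕ) :
    costFrom s₁ s₂ z [Move.ins] = 1 := by obtain ⟨a,b⟩ := z; rfl

lemma costFrom_single_diag (s₁ s₂ : List Bool) (z : ℕ × ℕ) :
    costFrom s₁ s₂ z [Move.diag] = if s₁[z.1]? = s₂[z.2]? then 0 else 1 := by
  obtain ⟨a,b⟩ := z; simp [costFrom]

lemma prefix_bounds (p q : List Move) :
    (endpos p).1 ≤ (endpos (p++q)).1 ∧ (endpos p).2 ≤ (endpos (p++q)).2 := by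
  simp only [endpos_counts, List.count_append]; constructor <;> omega

lemma key_sum (n : ℕ) (f : Fin n → Bool) :
    ∀ p : List Move, (endpos p).1 ≤ n → (endpos p).2 ≤ n → SharesNoEdgeWithDiag p →
    ∑ s : Fin n → Bool,
      ((1:ℝ)/12) ^ (costFrom (List.ofFn s) (List.ofFn fun k => xor (s k) (f k)) (0,0) p)
      = 2^n * wproduct p := by
  intro p
  induction p using List.reverseRecOn with
  | nil =>
      intro _ _ _
      simp [costFrom, wproduct_nil, Finset.card_univ]
  | append_singleton p m ih =>
      intro h1 h2 hsne
      have c1 : (endpos p).1 ≤ n := le_trans (prefix_bounds p [m]).1 h1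
      have c2 : (endpos p).2 ≤ n := le_trans (prefix_bounds p [m]).2 h2
      have hsne' : SharesNoEdgeWithDiag p := fun pre hpre =>
        hsne pre (hpre.trans (List.prefix_append p [m]))
      have IH := ih c1 c2 hsne'
      have hsplit : ∀ (s₁ s₂ : List Bool),
          costFrom s₁ s₂ (0,0) (p ++ [m])
            = costFrom s₁ s₂ (0,0) p + costFrom s₁ s₂ (endpos p) [m] := by
        intro s₁ s₂; rw [costFrom_append]; rfl
      cases m
      · -- del
        simp only [hsplit, costFrom_single_del, pow_add, pow_one]
        rw [← Finset.sum_mul, IH, wproduct_append_single]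
        simp [wmove]; ring
      · -- ins
        simp only [hsplit, costFrom_single_ins, pow_add, pow_one]
        rw [← Finset.sum_mul, IH, wproduct_append_single]
        simp [wmove]; ring
      · -- diag
        have hij : (endpos p).1 ≠ (endpos p).2 := hsne p List.prefix_rfl
        have hstep : (endpos (p ++ [Move.diag])).1 = (endpos p).1 + 1 ∧
            (endpos (p ++ [Move.diag])).2 = (endpos p).2 + 1 := by
          simp only [endpos_counts, List.count_append, List.count_cons, List.count_nil,
            show (Move.diag == Move.del) = false from rfl,
            show (Move.diag == Move.ins) = false from rfl,
            show (Move.diag == Move.diag) = true from rfl]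
          norm_num; omega
        have hi : (endpos p).1 < n := by omega
        have hj : (endpos p).2 < n := by omega
        set i := (endpos p).1 with hidef
        set j := (endpos p).2 with hjdef
        set I : Fin n := ⟨i, hi⟩ with hI
        set J : Fin n := ⟨j, hj⟩ with hJ
        set MX : Fin n := if j < i then I else J with hMX
        have hMXval : (MX : ℕ) = max i j := by
          rcases Nat.lt_or_ge j i with h | h
          · simp only [hMX, if_pos h, hI]; omega
          · simp only [hMX, if_neg (not_lt.mpr h), hJ]; omega
        have hE : endpos p = (i, j) := by rw [hidef, hjdef]
        set flip : (Fin n → Bool) → (Fin n → Bool) :=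
          fun s => Function.update s MX (!(s MX)) with hflip
        have hflipval : ∀ (s : Fin n → Bool) (t : Fin n), t ≠ MX → flip s t = s t := by
          intro s t ht; simp only [hflip, Function.update_of_ne ht]
        have hflipMX : ∀ s : Fin n → Bool, flip s MX = !(s MX) := by
          intro s; simp [hflip]
        have hinv : Function.Involutive flip := by
          intro s; funext t
          rcases eq_or_ne t MX with rfl | h
          · simp [hflip]
          · rw [hflipval _ _ h, hflipval _ _ h]
        have hkMX1 : ∀ k : ℕ, k < i → k ≠ (MX : ℕ) := by intro k hk; omega
        have hkMX2 : ∀ k : ℕ, k < j → k ≠ (MX : ℕ) := by intro k hk; omega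
        have hcost : ∀ s : Fin n → Bool,
            costFrom (List.ofFn (flip s)) (List.ofFn fun k => xor ((flip s) k) (f k)) (0,0) p
              = costFrom (List.ofFn s) (List.ofFn fun k => xor (s k) (f k)) (0,0) p := by
          intro s
          apply costFrom_ext
          · intro k hk
            rw [← endpos_eq, ← hidef] at hk
            have hkn : k < n := lt_trans hk hi
            rw [List.getElem?_ofFn, List.getElem?_ofFn]
            simp only [List.ofFnNthVal, dif_pos hkn, Option.some.injEq]
            exact hflipval s ⟨k, hkn⟩ (fun hc => hkMX1 k hk (congrArg Fin.val hc))
          · intro k hk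
            rw [← endpos_eq, ← hjdef] at hk
            have hkn : k < n := lt_trans hk hj
            rw [List.getElem?_ofFn, List.getElem?_ofFn]
            simp only [List.ofFnNthVal, dif_pos hkn, Option.some.injEq]
            rw [hflipval s ⟨k, hkn⟩ (fun hc => hkMX2 k hk (congrArg Fin.val hc))]
        have hsingle : ∀ s : Fin n → Bool,
            costFrom (List.ofFn s) (List.ofFn fun k => xor (s k) (f k)) (endpos p) [Move.diag]
              = if s I = xor (s J) (f J) then 0 else 1 := by
          intro s
          rw [costFrom_single_diag, hE]
          rw [List.getElem?_ofFn, List.getElem?_ofFn]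
          simp only [List.ofFnNthVal, dif_pos hi, dif_pos hj, Option.some.injEq, hI, hJ]
        have hJI : J ≠ I := by
          intro hc; exact hij ((congrArg Fin.val hc).symm)
        have hflipcond : ∀ s : Fin n → Bool,
            ((flip s) I = xor ((flip s) J) (f J)) ↔ ¬(s I = xor (s J) (f J)) := by
          intro s
          rcases Nat.lt_or_ge j i with h | h
          · have hMXI : MX = I := by rw [hMX, if_pos h]
            have e1 : flip s I = !(s I) := by rw [← hMXI, hflipMX, hMXI]
            have e2 : flip s J = s J := hflipval s J (hMXI ▸ hJI)
            rw [e1, e2]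
            cases hsb : s I <;> cases hxb : xor (s J) (f J) <;> simp
          · have hMXJ : MX = J := by rw [hMX, if_neg (not_lt.mpr h)]
            have e1 : flip s I = s I := hflipval s I (hMXJ ▸ hJI.symm)
            have e2 : flip s J = !(s J) := by rw [← hMXJ, hflipMX, hMXJ]
            rw [e1, e2]
            cases hsb : s I <;> cases hsj : s J <;> cases hfj : f J <;> simp
        -- now the sum manipulation
        simp only [hsplit, hsingle, pow_add]
        set A : (Fin n → Bool) → ℝ :=
          fun s => ((1:ℝ)/12) ^ (costFrom (List.ofFn s) (List.ofFn fun k => xor (s k) (f k)) (0,0) p) with hA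
        set B : (Fin n → Bool) → ℝ :=
          fun s => ((1:ℝ)/12) ^ (if s I = xor (s J) (f J) then (0:ℕ) else 1) with hB
        have hABflip : ∀ s, A (flip s) = A s := by
          intro s; rw [hA]; simp only; rw [hcost s]
        have hBsum : ∀ s, B s + B (flip s) = 13/12 := by
          intro s
          by_cases hc : s I = xor (s J) (f J)
          · rw [hB]; simp only
            rw [if_pos hc, if_neg (fun h => ((hflipcond s).mp h) hc)]
            norm_num
          · rw [hB]; simp only
            rw [if_neg hc, if_pos ((hflipcond s).mpr hc)]
            norm_num
        have hre : ∑ s : Fin n → Bool, A s * B s = ∑ s : Fin n → Bool, A (flip s) * B (flip s) :=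
          (Fintype.sum_bijective flip hinv.bijective _ _ (fun s => rfl)).symm
        have h2S : (2:ℝ) * ∑ s : Fin n → Bool, A s * B s
            = (13/12) * ∑ s : Fin n → Bool, A s := by
          calc (2:ℝ) * ∑ s : Fin n → Bool, A s * B s
              = (∑ s : Fin n → Bool, A s * B s) + ∑ s : Fin n → Bool, A (flip s) * B (flip s) := by
                rw [← hre]; ring
            _ = ∑ s : Fin n → Bool, (A s * B s + A s * B (flip s)) := by
                rw [Finset.sum_add_distrib]
                congr 1
                apply Finset.sum_congr rfl
                intro s _
                rw [hABflip s]
            _ = ∑ s : Fin n → Bool, A s * (13/12) := by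
                apply Finset.sum_congr rfl
                intro s _
                rw [← mul_add, hBsum s]
            _ = (13/12) * ∑ s : Fin n → Bool, A s := by
                rw [← Finset.sum_mul]; ring
        have hAsum : ∑ s : Fin n → Bool, A s = 2^n * wproduct p := IH
        rw [wproduct_append_single]
        simp only [wmove]
        nlinarith [h2S, hAsum]

lemma diag_cost (n : ℕ) (s f : Fin n → Bool) :
    pathCost (List.ofFn s) (List.ofFn fun k => xor (s k) (f k)) (diagPath n)
      = ∑ i : Fin n, (if f i then 1 else 0) := by
  have hgen : ∀ (s₁ s₂ : List Bool) (m z : ℕ),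
      costFrom s₁ s₂ (z, z) (List.replicate m Move.diag)
        = ∑ t ∈ Finset.range m, (if s₁[z+t]? = s₂[z+t]? then 0 else 1) := by
    intro s₁ s₂ m
    induction m with
    | zero => intro z; simp [costFrom]
    | succ m ih =>
        intro z
        rw [List.replicate_succ]
        show (if s₁[z]? = s₂[z]? then 0 else 1)
            + costFrom s₁ s₂ (z+1, z+1) (List.replicate m Move.diag) = _
        rw [ih (z+1), Finset.sum_range_succ']
        simp only [Nat.add_zero]
        rw [add_comm]
        congr 1
        apply Finset.sum_congr rfl
        intro t _
        have hz : z + 1 + t = z + (t + 1) := by omega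
        rw [hz]
  have h0 : pathCost (List.ofFn s) (List.ofFn fun k => xor (s k) (f k)) (diagPath n)
      = ∑ t ∈ Finset.range n,
          (if (List.ofFn s)[t]? = (List.ofFn fun k => xor (s k) (f k))[t]? then 0 else 1) := by
    rw [pathCost, diagPath, hgen _ _ n 0]
    apply Finset.sum_congr rfl; intro t _; norm_num
  rw [h0]
  rw [← Fin.sum_univ_eq_sum_range
    (fun t => if (List.ofFn s)[t]? = (List.ofFn fun k => xor (s k) (f k))[t]? then 0 else 1) n]
  apply Finset.sum_congr rfl
  intro t _
  rw [List.getElem?_ofFn, List.getElem?_ofFn]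
  simp only [List.ofFnNthVal, dif_pos t.isLt, Option.some.injEq, Fin.eta]
  cases hs : s t <;> cases hf : f t <;> simp [hs, hf]

def allLists (L : ℕ) : Finset (List Move) :=
  (Finset.range (L+1)).biUnion (fun k => Finset.image (fun v : Fin k → Move => List.ofFn v) Finset.univ)

lemma mem_allLists {p : List Move} {L : ℕ} (h : p.length ≤ L) : p ∈ allLists L := by
  rw [allLists, Finset.mem_biUnion]
  exact ⟨p.length, by rw [Finset.mem_range]; omega,
    by rw [Finset.mem_image]; exact ⟨p.get, Finset.mem_univ _, List.ofFn_get p⟩⟩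

noncomputable def pathsF (i j : ℕ) : Finset (List Move) :=
  (allLists (i+j)).filter (fun p => endpos p = (i,j))

lemma mem_pathsF {p : List Move} {i j : ℕ} : p ∈ pathsF i j ↔ endpos p = (i,j) := by
  constructor
  · intro hp; exact (Finset.mem_filter.mp hp).2
  · intro hp
    have hc := endpos_counts p
    rw [hp] at hc
    have h1 : i = p.count Move.del + p.count Move.diag := congrArg Prod.fst hc
    have h2 : j = p.count Move.ins + p.count Move.diag := congrArg Prod.snd hc
    refine Finset.mem_filter.mpr ⟨mem_allLists ?_, hp⟩
    rw [length_counts]; omega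

lemma endpos_zero {p : List Move} (h : endpos p = (0,0)) : p = [] := by
  have hc := endpos_counts p
  rw [h] at hc
  have h1 : (0:ℕ) = p.count Move.del + p.count Move.diag := congrArg Prod.fst hc
  have h2 : (0:ℕ) = p.count Move.ins + p.count Move.diag := congrArg Prod.snd hc
  have := length_counts p
  rw [← List.length_eq_zero_iff]
  omega

lemma pathsF_zero_left {j : ℕ} : pathsF 0 j ⊆ {List.replicate j Move.ins} := by
  intro p hp
  have hp' := mem_pathsF.mp hp
  have hc := endpos_counts p
  rw [hp'] at hc
  have h1 : (0:ℕ) = p.count Move.del + p.count Move.diag := congrArg Prod.fst hc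
  have h2 : j = p.count Move.ins + p.count Move.diag := congrArg Prod.snd hc
  rw [Finset.mem_singleton, List.eq_replicate_iff]
  constructor
  · rw [length_counts]; omega
  · intro b hb
    cases b
    · exfalso; have := List.count_pos_iff.mpr hb; omega
    · rfl
    · exfalso; have := List.count_pos_iff.mpr hb; omega

lemma pathsF_zero_right {i : ℕ} : pathsF i 0 ⊆ {List.replicate i Move.del} := by
  intro p hp
  have hp' := mem_pathsF.mp hp
  have hc := endpos_counts p
  rw [hp'] at hc
  have h1 : i = p.count Move.del + p.count Move.diag := congrArg Prod.fst hc
  have h2 : (0:ℕ) = p.count Move.ins + p.count Move.diag := congrArg Prod.snd hc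
  rw [Finset.mem_singleton, List.eq_replicate_iff]
  constructor
  · rw [length_counts]; omega
  · intro b hb
    cases b
    · rfl
    · exfalso; have := List.count_pos_iff.mpr hb; omega
    · exfalso; have := List.count_pos_iff.mpr hb; omega

lemma wproduct_replicate_le (m : ℕ) (mv : Move) (hmv : mv ≠ Move.diag) :
    wproduct (List.replicate m mv) ≤ ((5:ℝ)/6)^m := by
  cases mv
  · have : wproduct (List.replicate m Move.del) = ((1:ℝ)/12)^m := by
      simp [wproduct, List.count_replicate]
    rw [this]; exact pow_le_pow_left₀ (by norm_num) (by norm_num) m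
  · have : wproduct (List.replicate m Move.ins) = ((1:ℝ)/12)^m := by
      simp [wproduct, List.count_replicate]
    rw [this]; exact pow_le_pow_left₀ (by norm_num) (by norm_num) m
  · exact absurd rfl hmv

lemma endpos_cons_counts (m : Move) (q : List Move) :
    endpos (m :: q) = ((endpos q).1 + (if m = Move.ins then 0 else 1),
                       (endpos q).2 + (if m = Move.del then 0 else 1)) := by
  cases m <;> simp [endpos_counts, List.count_cons] <;> omega

lemma pathsF_sum_le : ∀ K i j : ℕ, i + j ≤ K →
    ∑ p ∈ pathsF i j, wproduct p ≤ ((5:ℝ)/6)^(i+j) := by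
  intro K
  induction K with
  | zero =>
      intro i j hij
      have hi : i = 0 := by omega
      have hj : j = 0 := by omega
      subst hi; subst hj
      calc ∑ p ∈ pathsF 0 0, wproduct p
          ≤ ∑ p ∈ ({[]} : Finset (List Move)), wproduct p := by
            apply Finset.sum_le_sum_of_subset_of_nonneg
            · intro p hp
              rw [Finset.mem_singleton]
              exact endpos_zero (mem_pathsF.mp hp)
            · intro p _ _; exact wproduct_nonneg p
        _ = 1 := by simp [wproduct_nil]
        _ ≤ _ := by norm_num
  | succ K ihK =>
      intro i j hij
      rcases Nat.lt_or_ge (i+j) (K+1) with h | h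
      · exact ihK i j (by omega)
      have hK : i + j = K + 1 := by omega
      rcases Nat.eq_zero_or_pos i with hi0 | hipos
      · subst hi0
        calc ∑ p ∈ pathsF 0 j, wproduct p
            ≤ ∑ p ∈ ({List.replicate j Move.ins} : Finset (List Move)), wproduct p := by
              apply Finset.sum_le_sum_of_subset_of_nonneg pathsF_zero_left
              intro p _ _; exact wproduct_nonneg p
          _ = wproduct (List.replicate j Move.ins) := by simp
          _ ≤ ((5:ℝ)/6)^j := wproduct_replicate_le j Move.ins (by simp)
          _ ≤ _ := by norm_num
      rcases Nat.eq_zero_or_pos j with hj0 | hjpos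
      · subst hj0
        calc ∑ p ∈ pathsF i 0, wproduct p
            ≤ ∑ p ∈ ({List.replicate i Move.del} : Finset (List Move)), wproduct p := by
              apply Finset.sum_le_sum_of_subset_of_nonneg pathsF_zero_right
              intro p _ _; exact wproduct_nonneg p
          _ = wproduct (List.replicate i Move.del) := by simp
          _ ≤ ((5:ℝ)/6)^i := wproduct_replicate_le i Move.del (by simp)
          _ ≤ _ := by norm_num
      -- both positive
      obtain ⟨i', rfl⟩ : ∃ i', i = i' + 1 := ⟨i - 1, by omega⟩
      obtain ⟨j', rfl⟩ : ∃ j', j = j' + 1 := ⟨j - 1, by omega⟩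
      have hcons : ∀ (m : Move) (q : List Move) (a b : ℕ),
          endpos (m :: q) = (a, b) →
          (m = Move.del → endpos q = (a - 1, b) ∧ 1 ≤ a) ∧
          (m = Move.ins → endpos q = (a, b - 1) ∧ 1 ≤ b) ∧
          (m = Move.diag → endpos q = (a - 1, b - 1) ∧ 1 ≤ a ∧ 1 ≤ b) := by
        intro m q a b hab
        rw [endpos_cons_counts] at hab
        have h1 : (endpos q).1 + (if m = Move.ins then 0 else 1) = a := congrArg Prod.fst hab
        have h2 : (endpos q).2 + (if m = Move.del then 0 else 1) = b := congrArg Prod.snd hab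
        refine ⟨?_, ?_, ?_⟩ <;> intro hm <;> subst hm <;> simp at h1 h2 <;>
          refine ⟨?_, by omega⟩ <;>
          · rw [show endpos q = ((endpos q).1, (endpos q).2) from rfl]
            rw [Prod.mk.injEq]
            omega
      have hsub : pathsF (i'+1) (j'+1) ⊆
          ((pathsF i' (j'+1)).image (fun q => Move.del :: q) ∪
           (pathsF (i'+1) j').image (fun q => Move.ins :: q)) ∪
          (pathsF i' j').image (fun q => Move.diag :: q) := by
        intro p hp
        have hp' := mem_pathsF.mp hp
        match p with
        | [] => exact absurd hp' (by simp [endpos_counts, Prod.ext_iff])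
        | m :: q =>
          have hc := hcons m q _ _ hp'
          rw [Finset.mem_union, Finset.mem_union]
          cases m
          · left; left
            rw [Finset.mem_image]
            refine ⟨q, mem_pathsF.mpr ?_, rfl⟩
            have := (hc.1 rfl).1; simpa using this
          · left; right
            rw [Finset.mem_image]
            refine ⟨q, mem_pathsF.mpr ?_, rfl⟩
            have := (hc.2.1 rfl).1; simpa using this
          · right
            rw [Finset.mem_image]
            refine ⟨q, mem_pathsF.mpr ?_, rfl⟩
            have := (hc.2.2 rfl).1; simpa using this
      have himg : ∀ (m : Move) (i₀ j₀ : ℕ),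
          ∑ p ∈ (pathsF i₀ j₀).image (fun q => m :: q), wproduct p
            = wmove m * ∑ q ∈ pathsF i₀ j₀, wproduct q := by
        intro m i₀ j₀
        rw [Finset.sum_image (fun x _ y _ hxy => by injection hxy)]
        rw [Finset.mul_sum]
        apply Finset.sum_congr rfl
        intro q _
        rw [wproduct_cons]
      have hdisj1 : Disjoint ((pathsF i' (j'+1)).image (fun q => Move.del :: q))
          ((pathsF (i'+1) j').image (fun q => Move.ins :: q)) := by
        rw [Finset.disjoint_left]
        intro p hp1 hp2
        obtain ⟨q1, _, e1⟩ := Finset.mem_image.mp hp1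
        obtain ⟨q2, _, e2⟩ := Finset.mem_image.mp hp2
        rw [← e2] at e1; injection e1 with he ht; exact Move.noConfusion he
      have hdisj2 : Disjoint (((pathsF i' (j'+1)).image (fun q => Move.del :: q)) ∪
          ((pathsF (i'+1) j').image (fun q => Move.ins :: q)))
          ((pathsF i' j').image (fun q => Move.diag :: q)) := by
        rw [Finset.disjoint_left]
        intro p hp1 hp2
        obtain ⟨q2, _, e2⟩ := Finset.mem_image.mp hp2
        rcases Finset.mem_union.mp hp1 with h' | h' <;>
          · obtain ⟨q1, _, e1⟩ := Finset.mem_image.mp h'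
            rw [← e2] at e1; injection e1 with he ht; exact Move.noConfusion he
      calc ∑ p ∈ pathsF (i'+1) (j'+1), wproduct p
          ≤ ∑ p ∈ (((pathsF i' (j'+1)).image (fun q => Move.del :: q) ∪
              (pathsF (i'+1) j').image (fun q => Move.ins :: q)) ∪
              (pathsF i' j').image (fun q => Move.diag :: q)), wproduct p := by
            apply Finset.sum_le_sum_of_subset_of_nonneg hsub
            intro p _ _; exact wproduct_nonneg p
        _ = wmove Move.del * ∑ q ∈ pathsF i' (j'+1), wproduct q
            + wmove Move.ins * ∑ q ∈ pathsF (i'+1) j', wproduct q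
            + wmove Move.diag * ∑ q ∈ pathsF i' j', wproduct q := by
            rw [Finset.sum_union hdisj2, Finset.sum_union hdisj1, himg, himg, himg]
        _ ≤ (1/12) * ((5:ℝ)/6)^(i' + (j'+1)) + (1/12) * ((5:ℝ)/6)^((i'+1) + j')
            + (13/24) * ((5:ℝ)/6)^(i' + j') := by
            have n1 := ihK i' (j'+1) (by omega)
            have n2 := ihK (i'+1) j' (by omega)
            have n3 := ihK i' j' (by omega)
            simp only [wmove]
            have w1 : (0:ℝ) < 1/12 := by norm_num
            gcongr <;> norm_num
        _ ≤ ((5:ℝ)/6)^((i'+1) + (j'+1)) := by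
            have e1 : i' + (j'+1) = (i' + j') + 1 := by omega
            have e2 : (i'+1) + j' = (i' + j') + 1 := by omega
            have e3 : (i'+1) + (j'+1) = (i' + j') + 2 := by omega
            rw [e1, e2, e3, pow_succ, pow_succ, pow_succ]
            have hp : (0:ℝ) ≤ ((5:ℝ)/6)^(i'+j') := by positivity
            nlinarith


/-- **Off-diagonal alignments are worse than the diagonal, whp.**
Let `s₁` be a uniformly random bitstring of length `n`, and `s₂` obtained from
`s₁` by independently flipping each bit with probability `p_s ≤ 0.028`. Then
with probability `1 − e^{−Ω(n)}`, every alignment of `s₁` and `s₂` that shares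
no edge with the diagonal alignment has cost strictly greater than the cost of
the diagonal alignment. The sample space is the pair (bits of `s₁`, flip
indicators), with the indicated product weights. -/
theorem offdiag_worse_than_diagonal :
    ∃ C ε : ℝ, 0 < C ∧ 0 < ε ∧
      ∀ n : ℕ, ∀ ps : ℝ, 0 ≤ ps → ps ≤ 0.028 →
        ∑ x : (Fin n → Bool) × (Fin n → Bool),
          (if ∀ p : List Move, endpos p = (n, n) → SharesNoEdgeWithDiag p →
                pathCost (List.ofFn x.1) (List.ofFn (fun i => xor (x.1 i) (x.2 i))) p >
                  pathCost (List.ofFn x.1) (List.ofFn (fun i => xor (x.1 i) (x.2 i)))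
                    (diagPath n)
            then 0
            else (1 / 2 : ℝ) ^ n * ∏ i, (if x.2 i then ps else 1 - ps)) ≤
          C * Real.exp (-ε * n) := by
  refine ⟨1, 1/20, one_pos, by norm_num, ?_⟩
  intro n ps hps0 hps1
  have hps1' : ps ≤ 1 := by norm_num at hps1 ⊢; linarith
  -- notation
  set W : (Fin n → Bool) × (Fin n → Bool) → ℝ :=
    fun x => (1/2:ℝ)^n * ∏ i, (if x.2 i then ps else 1-ps) with hW
  have hWnn : ∀ x, 0 ≤ W x := by
    intro x
    apply mul_nonneg (by positivity)
    apply Finset.prod_nonneg; intro i _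
    split <;> linarith
  set cst : List Move → (Fin n → Bool) × (Fin n → Bool) → ℕ :=
    fun p x => pathCost (List.ofFn x.1) (List.ofFn fun i => xor (x.1 i) (x.2 i)) p with hcst
  set Fn : (Fin n → Bool) → ℕ := fun f => ∑ i, if f i then 1 else 0 with hFn
  have hdiag : ∀ x : (Fin n → Bool) × (Fin n → Bool), cst (diagPath n) x = Fn x.2 :=
    fun x => diag_cost n x.1 x.2
  set Pstar : Finset (List Move) :=
    (allLists (n+n)).filter (fun p => endpos p = (n,n) ∧ SharesNoEdgeWithDiag p) with hPstar
  have htermnn : ∀ (p : List Move) (x : (Fin n → Bool) × (Fin n → Bool)),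
      0 ≤ W x * (12:ℝ)^(Fn x.2) * ((1:ℝ)/12)^(cst p x) := by
    intro p x
    apply mul_nonneg (mul_nonneg (hWnn x) (by positivity)) (by positivity)
  -- Step A : pointwise union bound
  have key1 : ∀ x : (Fin n → Bool) × (Fin n → Bool),
      (if ∀ p : List Move, endpos p = (n, n) → SharesNoEdgeWithDiag p →
            cst p x > cst (diagPath n) x
        then (0:ℝ) else W x)
        ≤ ∑ p ∈ Pstar, W x * (12:ℝ)^(Fn x.2) * ((1:ℝ)/12)^(cst p x) := by
    intro x
    by_cases hg : ∀ p : List Move, endpos p = (n, n) → SharesNoEdgeWithDiag p →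
        cst p x > cst (diagPath n) x
    · rw [if_pos hg]
      exact Finset.sum_nonneg (fun p _ => htermnn p x)
    · rw [if_neg hg]
      push_neg at hg
      obtain ⟨p₀, he, hsne, hle⟩ := hg
      have hmem : p₀ ∈ Pstar := by
        rw [hPstar, Finset.mem_filter]
        refine ⟨mem_allLists ?_, he, hsne⟩
        have hc := endpos_counts p₀
        rw [he] at hc
        have h1 : n = p₀.count Move.del + p₀.count Move.diag := congrArg Prod.fst hc
        have h2 : n = p₀.count Move.ins + p₀.count Move.diag := congrArg Prod.snd hc
        rw [length_counts]; omega
      have hone : (1:ℝ) ≤ (12:ℝ)^(Fn x.2) * ((1:ℝ)/12)^(cst p₀ x) := by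
        rw [one_div, inv_pow, ← div_eq_mul_inv, le_div_iff₀ (by positivity), one_mul]
        apply pow_le_pow_right₀ (by norm_num)
        rw [← hdiag x]; exact hle
      calc W x = W x * 1 := (mul_one _).symm
        _ ≤ W x * ((12:ℝ)^(Fn x.2) * ((1:ℝ)/12)^(cst p₀ x)) := by
            apply mul_le_mul_of_nonneg_left hone (hWnn x)
        _ = W x * (12:ℝ)^(Fn x.2) * ((1:ℝ)/12)^(cst p₀ x) := by ring
        _ ≤ ∑ p ∈ Pstar, W x * (12:ℝ)^(Fn x.2) * ((1:ℝ)/12)^(cst p x) :=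
            Finset.single_le_sum (fun p _ => htermnn p x) hmem
  -- Step B : per-path expectation
  have stepB : ∀ p ∈ Pstar,
      ∑ x : (Fin n → Bool) × (Fin n → Bool),
        W x * (12:ℝ)^(Fn x.2) * ((1:ℝ)/12)^(cst p x)
      = (1 + 11*ps)^n * wproduct p := by
    intro p hp
    obtain ⟨-, he, hsne⟩ := Finset.mem_filter.mp hp
    have h1 : (endpos p).1 ≤ n := by rw [he]
    have h2 : (endpos p).2 ≤ n := by rw [he]
    rw [Fintype.sum_prod_type_right]
    have inner : ∀ f : Fin n → Bool,
        ∑ s : Fin n → Bool,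
          W (s, f) * (12:ℝ)^(Fn f) * ((1:ℝ)/12)^(cst p (s, f))
        = ((1/2:ℝ)^n * ∏ i, (if f i then ps else 1-ps)) * (12:ℝ)^(Fn f)
            * (2^n * wproduct p) := by
      intro f
      have hpt : ∀ s : Fin n → Bool,
          W (s, f) * (12:ℝ)^(Fn f) * ((1:ℝ)/12)^(cst p (s, f))
          = (((1/2:ℝ)^n * ∏ i, (if f i then ps else 1-ps)) * (12:ℝ)^(Fn f))
            * ((1:ℝ)/12)^(costFrom (List.ofFn s) (List.ofFn fun k => xor (s k) (f k)) (0,0) p) := by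
        intro s
        simp only [hW, hcst, pathCost]
      rw [Finset.sum_congr rfl (fun s _ => hpt s), ← Finset.mul_sum,
        key_sum n f p h1 h2 hsne]
    rw [Finset.sum_congr rfl (fun f _ => inner f)]
    have hpow : ∀ f : Fin n → Bool, (12:ℝ)^(Fn f) = ∏ i, (12:ℝ)^(if f i then 1 else 0) := by
      intro f
      rw [hFn, Finset.prod_pow_eq_pow_sum]
    have rearr : ∀ f : Fin n → Bool,
        ((1/2:ℝ)^n * ∏ i, (if f i then ps else 1-ps)) * (12:ℝ)^(Fn f) * (2^n * wproduct p)
        = ((1/2:ℝ)^n * 2^n * wproduct p) *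
            ∏ i, ((if f i then ps else 1-ps) * (12:ℝ)^(if f i then 1 else 0)) := by
      intro f
      rw [Finset.prod_mul_distrib, hpow f]
      ring
    rw [Finset.sum_congr rfl (fun f _ => rearr f), ← Finset.mul_sum]
    have hsumf : ∑ f : Fin n → Bool,
        ∏ i, ((if f i then ps else 1-ps) * (12:ℝ)^(if f i then 1 else 0))
        = (1 + 11*ps)^n := by
      rw [← Fintype.piFinset_univ,
        ← Finset.prod_univ_sum (fun _ : Fin n => (Finset.univ : Finset Bool))
          (fun _ b => (if b then ps else 1-ps) * (12:ℝ)^(if b then 1 else 0))]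
      have : ∀ i : Fin n, ∑ b : Bool,
          (if b then ps else 1-ps) * (12:ℝ)^(if b then 1 else 0) = 1 + 11*ps := by
        intro i
        rw [Fintype.sum_bool]
        norm_num; ring
      rw [Finset.prod_congr rfl (fun i _ => this i), Finset.prod_const, Finset.card_univ,
        Fintype.card_fin]
    rw [hsumf]
    have h12 : ((1:ℝ)/2)^n * 2^n = 1 := by
      rw [← mul_pow]; norm_num
    rw [h12]; ring
  -- Step C : assemble
  have hsub : Pstar ⊆ pathsF n n := by
    intro p hp
    obtain ⟨hmem, he, -⟩ := Finset.mem_filter.mp hp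
    exact mem_pathsF.mpr he
  calc ∑ x : (Fin n → Bool) × (Fin n → Bool),
        (if ∀ p : List Move, endpos p = (n, n) → SharesNoEdgeWithDiag p →
              cst p x > cst (diagPath n) x
          then (0:ℝ) else W x)
      ≤ ∑ x : (Fin n → Bool) × (Fin n → Bool), ∑ p ∈ Pstar,
          W x * (12:ℝ)^(Fn x.2) * ((1:ℝ)/12)^(cst p x) :=
        Finset.sum_le_sum (fun x _ => key1 x)
    _ = ∑ p ∈ Pstar, ∑ x : (Fin n → Bool) × (Fin n → Bool),
          W x * (12:ℝ)^(Fn x.2) * ((1:ℝ)/12)^(cst p x) := Finset.sum_comm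
    _ = ∑ p ∈ Pstar, (1 + 11*ps)^n * wproduct p :=
        Finset.sum_congr rfl stepB
    _ = (1 + 11*ps)^n * ∑ p ∈ Pstar, wproduct p := by rw [Finset.mul_sum]
    _ ≤ (1 + 11*ps)^n * ∑ p ∈ pathsF n n, wproduct p := by
        apply mul_le_mul_of_nonneg_left _ (by positivity)
        apply Finset.sum_le_sum_of_subset_of_nonneg hsub
        intro p _ _; exact wproduct_nonneg p
    _ ≤ (1 + 11*ps)^n * ((5:ℝ)/6)^(n+n) := by
        apply mul_le_mul_of_nonneg_left (pathsF_sum_le (n+n) n n le_rfl) (by positivity)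
    _ ≤ Real.exp (-(1/20)) ^ n := by
        have e1 : (1 + 11*ps)^n * ((5:ℝ)/6)^(n+n)
            = ((1 + 11*ps) * (25/36))^n := by
          rw [show n + n = n + n from rfl, pow_add, ← mul_assoc, ← mul_pow, ← mul_pow]
          congr 1
          ring
        rw [e1]
        apply pow_le_pow_left₀ (by positivity)
        have hexp : (0.95:ℝ) ≤ Real.exp (-(1/20)) := by
          have := Real.add_one_le_exp (-(1/20):ℝ)
          linarith
        have : (1 + 11*ps) * (25/36:ℝ) ≤ 0.95 := by
          norm_num at hps1 ⊢
          nlinarith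
        linarith
    _ ≤ 1 * Real.exp (-(1/20) * n) := by
        rw [one_mul, show (-(1/20:ℝ)) * n = n * (-(1/20)) from by ring, Real.exp_nat_mul]
  done
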